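/- Let q, p : End_ℂ(ℂ[X]) be the ℂ-linear endomorphisms of the polynomial ring ℂ[X] given by q(f) = X·f (multiplication by X) and p(f) = −i·f′ (−i times the formal derivative), and let n = (q² + p² − 1)/2. Let σx, σy, σz denote the Pauli matrices in M₂(ℂ), and let B = End_ℂ(ℂ[X]) ⊗_ℂ M₂(ℂ), regarded as a Lie algebra over ℂ with bracket [a,b] = ab − ba. Then the Lie subalgebra of B generated (as a ℂ-Lie subalgebra) by the set {n⊗σz, q⊗1, p⊗1, 1⊗σx, 1⊗σy} contains qʳpˢ ⊗ M for every pair of natural numbers r, s and every matrix M ∈ M₂(ℂ). -/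

import Mathlib

/-!
Since `[X ⊗ a, Y ⊗ b] = XY ⊗ ab - YX ⊗ ba`, the Pauli relations `σₐσ_b = iσ_c = -σ_bσₐ` turn
brackets of elements with different Pauli parts into anticommutators `(XY + YX) ⊗ σ_c`, and
`σₐ² = 1` turns brackets with equal Pauli parts into commutators `(XY - YX) ⊗ 1`. Bracketing
`n ⊗ σz` with `q ⊗ 1` and `p ⊗ 1` gives `p ⊗ σz` and `q ⊗ σz`, so the operators `X` with
`X ⊗ σ` in the Lie subalgebra for all three Pauli matrices form a subspace that contains `1, q, p`
and is closed under anticommutators. As `q (qʳpˢ) + (qʳpˢ) q = 2 qʳ⁺¹pˢ - i s qʳpˢ⁻¹`, it contains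
every `qʳpˢ`. The commutator `[qʳpˢ⁺¹, q] = -i (s + 1) qʳpˢ` then puts `qʳpˢ ⊗ 1` in the
subalgebra as well, and `1, σx, σy, σz` span `M₂(ℂ)`.
-/

open scoped TensorProduct Matrix

attribute [local instance 100] LieRing.ofAssociativeRing

open Complex (I I_ne_zero)

section CommutationRelation

variable {A : Type*} [Ring A] [Algebra ℂ A] {q p : A} {c : ℂ}

theorem pow_succ_mul_eq_of_commutator (hc : q * p - p * q = c • 1) (s : ℕ) :
    p ^ (s + 1) * q = q * p ^ (s + 1) - ((s + 1 : ℂ) * c) • p ^ s := by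
  have hpq : p * q = q * p - c • 1 := by rw [← hc]; abel
  induction s with
  | zero => simp [hpq]
  | succ s ih =>
    rw [pow_succ' p (s + 1), mul_assoc, ih, mul_sub, mul_smul_comm, ← mul_assoc, hpq,
      sub_mul, mul_assoc, ← pow_succ', ← pow_succ', smul_mul_assoc, one_mul]
    push_cast
    module

-- At `s = 0` the truncated `s - 1` is harmless: its coefficient vanishes.
theorem pow_mul_pow_mul_eq_of_commutator (hc : q * p - p * q = c • 1) (r s : ℕ) :
    q ^ r * p ^ s * q = q ^ (r + 1) * p ^ s - (s * c) • (q ^ r * p ^ (s - 1)) := by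
  cases s with
  | zero => simp [pow_succ]
  | succ s =>
    rw [mul_assoc, pow_succ_mul_eq_of_commutator hc, mul_sub, mul_smul_comm, ← mul_assoc,
      ← pow_succ]
    push_cast
    rfl

theorem commutator_number_position (hc : q * p - p * q = c • 1) :
    ((1 : ℂ) / 2) • (q ^ 2 + p ^ 2 - 1) * q - q * (((1 : ℂ) / 2) • (q ^ 2 + p ^ 2 - 1)) =
      -(c • p) := by
  calc _ = ((1 : ℂ) / 2) • -(p * (q * p - p * q) + (q * p - p * q) * p) := by
        simp only [smul_mul_assoc, mul_smul_comm, ← smul_sub]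
        congr 1
        noncomm_ring
    _ = -(c • p) := by
        rw [hc]
        simp only [mul_smul_comm, smul_mul_assoc, mul_one, one_mul]
        module

theorem commutator_number_momentum (hc : q * p - p * q = c • 1) :
    ((1 : ℂ) / 2) • (q ^ 2 + p ^ 2 - 1) * p - p * (((1 : ℂ) / 2) • (q ^ 2 + p ^ 2 - 1)) =
      c • q := by
  calc _ = ((1 : ℂ) / 2) • (q * (q * p - p * q) + (q * p - p * q) * q) := by
        simp only [smul_mul_assoc, mul_smul_comm, ← smul_sub]
        congr 1
        noncomm_ring
    _ = c • q := by
        rw [hc]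
        simp only [mul_smul_comm, smul_mul_assoc, mul_one, one_mul]
        module

theorem pow_mul_pow_mem_of_jordan (hc : q * p - p * q = c • 1) {V : Submodule ℂ A}
    (hV : ∀ x ∈ V, ∀ y ∈ V, x * y + y * x ∈ V) (h1 : 1 ∈ V) (hq : q ∈ V) (hp : p ∈ V)
    (r s : ℕ) : q ^ r * p ^ s ∈ V := by
  have half_mem {x : A} (h : x + x ∈ V) : x ∈ V := by
    rw [← two_smul ℂ] at h
    exact (V.smul_mem_iff two_ne_zero).mp h
  induction r generalizing s with
  | zero =>
    rw [pow_zero, one_mul]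
    induction s with
    | zero => rwa [pow_zero]
    | succ s ih =>
      have h := hV _ hp _ ih
      rw [← pow_succ', ← pow_succ] at h
      exact half_mem h
  | succ r ih =>
    have h := hV _ hq _ (ih s)
    rw [pow_mul_pow_mul_eq_of_commutator hc, ← mul_assoc, ← pow_succ'] at h
    refine half_mem ?_
    convert V.add_mem h (V.smul_mem (s * c) (ih (s - 1))) using 1
    abel

end CommutationRelation

theorem Polynomial.commutator_mul_X_derivative {q p : Module.End ℂ (Polynomial ℂ)}
    (hq : ∀ f : Polynomial ℂ, q f = Polynomial.X * f)
    (hp : ∀ f : Polynomial ℂ, p f = (-I) • Polynomial.derivative f) :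
    q * p - p * q = I • 1 := by
  refine LinearMap.ext fun f => ?_
  simp only [LinearMap.sub_apply, Module.End.mul_apply, LinearMap.smul_apply,
    Module.End.one_apply, hq, hp, Polynomial.derivative_mul, Polynomial.derivative_X,
    smul_add, one_mul, mul_smul_comm]
  module

namespace Matrix

def pauliX : Matrix (Fin 2) (Fin 2) ℂ := !![0, 1; 1, 0]

def pauliY : Matrix (Fin 2) (Fin 2) ℂ := !![0, -I; I, 0]

def pauliZ : Matrix (Fin 2) (Fin 2) ℂ := !![1, 0; 0, -1]

theorem pauliX_mul_pauliX : pauliX * pauliX = 1 := by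
  simp [pauliX, one_fin_two]

theorem pauliX_mul_pauliY : pauliX * pauliY = I • pauliZ := by
  simp [pauliX, pauliY, pauliZ]

theorem pauliY_mul_pauliX : pauliY * pauliX = -(I • pauliZ) := by
  simp [pauliX, pauliY, pauliZ]

theorem pauliY_mul_pauliZ : pauliY * pauliZ = I • pauliX := by
  simp [pauliX, pauliY, pauliZ]

theorem pauliZ_mul_pauliY : pauliZ * pauliY = -(I • pauliX) := by
  simp [pauliX, pauliY, pauliZ]

theorem pauliZ_mul_pauliX : pauliZ * pauliX = I • pauliY := by
  simp [pauliX, pauliY, pauliZ]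

theorem pauliX_mul_pauliZ : pauliX * pauliZ = -(I • pauliY) := by
  simp [pauliX, pauliY, pauliZ]

theorem span_one_pauli : Submodule.span ℂ {1, pauliX, pauliY, pauliZ} = ⊤ := by
  refine Submodule.eq_top_iff'.mpr fun M => ?_
  have hM : M = ((M 0 0 + M 1 1) / 2) • 1 + ((M 0 1 + M 1 0) / 2) • pauliX
      + (I * (M 0 1 - M 1 0) / 2) • pauliY + ((M 0 0 - M 1 1) / 2) • pauliZ := by
    ext i j
    fin_cases i <;> fin_cases j <;> simp [pauliX, pauliY, pauliZ, one_fin_two] <;> ring_nf <;>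
      simp [Complex.I_sq] <;> ring
  rw [hM]
  refine Submodule.add_mem _ (Submodule.add_mem _ (Submodule.add_mem _ ?_ ?_) ?_) ?_ <;>
    exact Submodule.smul_mem _ _ (Submodule.subset_span (by simp))

end Matrix

theorem Algebra.TensorProduct.lie_tmul_tmul {R A B : Type*} [CommRing R] [Ring A] [Algebra R A]
    [Ring B] [Algebra R B] (a a' : A) (b b' : B) :
    ⁅a ⊗ₜ[R] b, a' ⊗ₜ[R] b'⁆ = (a * a') ⊗ₜ (b * b') - (a' * a) ⊗ₜ (b' * b) := by
  rw [Ring.lie_def, Algebra.TensorProduct.tmul_mul_tmul, Algebra.TensorProduct.tmul_mul_tmul]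

namespace LieSubalgebra

section TensorProduct

variable {A B : Type*} [Ring A] [Algebra ℂ A] [Ring B] [Algebra ℂ B]

def tmulRight (K : LieSubalgebra ℂ (A ⊗[ℂ] B)) (b : B) : Submodule ℂ A :=
  K.toSubmodule.comap ((TensorProduct.mk ℂ A B).flip b)

variable {K : LieSubalgebra ℂ (A ⊗[ℂ] B)}

@[simp]
theorem mem_tmulRight {b : B} {X : A} : X ∈ K.tmulRight b ↔ X ⊗ₜ b ∈ K :=
  Iff.rfl

theorem smul_tmul_mem_iff {t : ℂ} (ht : t ≠ 0) {X : A} {b : B} :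
    (t • X) ⊗ₜ b ∈ K ↔ X ⊗ₜ b ∈ K := by
  rw [← TensorProduct.smul_tmul']
  exact K.toSubmodule.smul_mem_iff ht

theorem commutator_tmul_mem_of_tmul_one {X Y : A} {b : B} (hX : X ⊗ₜ b ∈ K)
    (hY : Y ⊗ₜ (1 : B) ∈ K) : (X * Y - Y * X) ⊗ₜ b ∈ K := by
  have h := K.lie_mem hX hY
  rwa [Algebra.TensorProduct.lie_tmul_tmul, mul_one, one_mul, ← TensorProduct.sub_tmul] at h

theorem anticommutator_tmul_mem {a b c : B} {t : ℂ} (ht : t ≠ 0)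
    (hab : a * b = t • c) (hba : b * a = -(t • c)) {X Y : A} (hX : X ⊗ₜ a ∈ K)
    (hY : Y ⊗ₜ b ∈ K) : (X * Y + Y * X) ⊗ₜ c ∈ K := by
  have h := K.lie_mem hX hY
  rw [Algebra.TensorProduct.lie_tmul_tmul, hab, hba, TensorProduct.tmul_neg, sub_neg_eq_add,
    TensorProduct.tmul_smul, TensorProduct.tmul_smul, ← smul_add, ← TensorProduct.add_tmul] at h
  exact (K.toSubmodule.smul_mem_iff ht).mp h

end TensorProduct

section Pauli

open Matrix

variable {A : Type*} [Ring A] [Algebra ℂ A]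

def pauliSubmodule (K : LieSubalgebra ℂ (A ⊗[ℂ] Matrix (Fin 2) (Fin 2) ℂ)) : Submodule ℂ A :=
  K.tmulRight pauliX ⊓ K.tmulRight pauliY ⊓ K.tmulRight pauliZ

variable {K : LieSubalgebra ℂ (A ⊗[ℂ] Matrix (Fin 2) (Fin 2) ℂ)}

theorem mem_pauliSubmodule {X : A} :
    X ∈ K.pauliSubmodule ↔ X ⊗ₜ pauliX ∈ K ∧ X ⊗ₜ pauliY ∈ K ∧ X ⊗ₜ pauliZ ∈ K := by
  simp [pauliSubmodule, and_assoc]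

theorem mul_add_mul_mem_pauliSubmodule {X Y : A} (hX : X ∈ K.pauliSubmodule)
    (hY : Y ∈ K.pauliSubmodule) : X * Y + Y * X ∈ K.pauliSubmodule := by
  obtain ⟨hXx, hXy, hXz⟩ := mem_pauliSubmodule.mp hX
  obtain ⟨hYx, hYy, hYz⟩ := mem_pauliSubmodule.mp hY
  exact mem_pauliSubmodule.mpr
    ⟨anticommutator_tmul_mem I_ne_zero pauliY_mul_pauliZ pauliZ_mul_pauliY hXy hYz,
     anticommutator_tmul_mem I_ne_zero pauliZ_mul_pauliX pauliX_mul_pauliZ hXz hYx,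
     anticommutator_tmul_mem I_ne_zero pauliX_mul_pauliY pauliY_mul_pauliX hXx hYy⟩

theorem mem_pauliSubmodule_of_tmul_pauliZ_mem (hx : (1 : A) ⊗ₜ pauliX ∈ K)
    (hy : (1 : A) ⊗ₜ pauliY ∈ K) {X : A} (hX : X ⊗ₜ pauliZ ∈ K) : X ∈ K.pauliSubmodule := by
  have half_mem {M : Matrix (Fin 2) (Fin 2) ℂ} (h : (X + X) ⊗ₜ M ∈ K) : X ⊗ₜ M ∈ K := by
    rwa [← two_smul ℂ, smul_tmul_mem_iff two_ne_zero] at h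
  have hXx := anticommutator_tmul_mem I_ne_zero pauliY_mul_pauliZ pauliZ_mul_pauliY hy hX
  have hXy := anticommutator_tmul_mem I_ne_zero pauliZ_mul_pauliX pauliX_mul_pauliZ hX hx
  rw [one_mul, mul_one] at hXx hXy
  exact mem_pauliSubmodule.mpr ⟨half_mem hXx, half_mem hXy, hX⟩

theorem one_mem_pauliSubmodule (hx : (1 : A) ⊗ₜ pauliX ∈ K) (hy : (1 : A) ⊗ₜ pauliY ∈ K) :
    (1 : A) ∈ K.pauliSubmodule := by
  refine mem_pauliSubmodule_of_tmul_pauliZ_mem hx hy ?_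
  have h := anticommutator_tmul_mem I_ne_zero pauliX_mul_pauliY pauliY_mul_pauliX hx hy
  rwa [one_mul, ← two_smul ℂ, smul_tmul_mem_iff two_ne_zero] at h

theorem commutator_tmul_one_mem {X Y : A} (hX : X ∈ K.pauliSubmodule)
    (hY : Y ∈ K.pauliSubmodule) : (X * Y - Y * X) ⊗ₜ (1 : Matrix (Fin 2) (Fin 2) ℂ) ∈ K := by
  have h := K.lie_mem (mem_pauliSubmodule.mp hX).1 (mem_pauliSubmodule.mp hY).1
  rwa [Algebra.TensorProduct.lie_tmul_tmul, pauliX_mul_pauliX, ← TensorProduct.sub_tmul] at h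

theorem tmul_mem_of_mem_pauliSubmodule {X : A} (hX : X ∈ K.pauliSubmodule)
    (h1 : X ⊗ₜ (1 : Matrix (Fin 2) (Fin 2) ℂ) ∈ K) (M : Matrix (Fin 2) (Fin 2) ℂ) :
    X ⊗ₜ M ∈ K := by
  obtain ⟨hx, hy, hz⟩ := mem_pauliSubmodule.mp hX
  have hspan : Submodule.span ℂ {1, pauliX, pauliY, pauliZ} ≤
      K.toSubmodule.comap (TensorProduct.mk ℂ A _ X) := by
    rw [Submodule.span_le]
    rintro _ (rfl | rfl | rfl | rfl) <;> assumption
  exact hspan (span_one_pauli ▸ Submodule.mem_top)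

theorem pow_mul_pow_tmul_mem {q p : A} {c : ℂ} (hc : q * p - p * q = c • 1) (hc0 : c ≠ 0)
    (hx : (1 : A) ⊗ₜ pauliX ∈ K) (hy : (1 : A) ⊗ₜ pauliY ∈ K) (hq : q ⊗ₜ pauliZ ∈ K)
    (hp : p ⊗ₜ pauliZ ∈ K) (r s : ℕ) (M : Matrix (Fin 2) (Fin 2) ℂ) :
    (q ^ r * p ^ s) ⊗ₜ M ∈ K := by
  have hV (r s : ℕ) : q ^ r * p ^ s ∈ K.pauliSubmodule :=
    pow_mul_pow_mem_of_jordan hc (fun _ hx _ hy => mul_add_mul_mem_pauliSubmodule hx hy)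
      (one_mem_pauliSubmodule hx hy) (mem_pauliSubmodule_of_tmul_pauliZ_mem hx hy hq)
      (mem_pauliSubmodule_of_tmul_pauliZ_mem hx hy hp) r s
  refine tmul_mem_of_mem_pauliSubmodule (hV r s) ?_ M
  have h := commutator_tmul_one_mem (hV r (s + 1)) (hV 1 0)
  rwa [pow_one, pow_zero, mul_one, pow_mul_pow_mul_eq_of_commutator hc, ← mul_assoc,
    ← pow_succ', sub_sub_cancel_left, Nat.add_sub_cancel, ← neg_smul,
    smul_tmul_mem_iff (neg_ne_zero.mpr (mul_ne_zero (Nat.cast_ne_zero.mpr s.succ_ne_zero) hc0))]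
    at h

end Pauli

end LieSubalgebra

open Matrix LieSubalgebra in
/-- The Lie subalgebra of `End(ℂ[X]) ⊗ M₂(ℂ)` (with commutator bracket) generated by
`{n ⊗ σz, q ⊗ 1, p ⊗ 1, 1 ⊗ σx, 1 ⊗ σy}`, where `q` is multiplication by `X`,
`p = -i d/dX` and `n = (q² + p² - 1)/2`, contains `qʳpˢ ⊗ M` for all `r s : ℕ`
and every `M ∈ M₂(ℂ)`. -/
theorem stmt_0
    (q p n : Module.End ℂ (Polynomial ℂ))
    (hq : ∀ f : Polynomial ℂ, q f = Polynomial.X * f)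
    (hp : ∀ f : Polynomial ℂ, p f = (-Complex.I) • Polynomial.derivative f)
    (hn : n = ((1 : ℂ)/2) • (q ^ 2 + p ^ 2 - 1))
    (σx σy σz : Matrix (Fin 2) (Fin 2) ℂ)
    (hx : σx = !![0, 1; 1, 0])
    (hy : σy = !![0, -Complex.I; Complex.I, 0])
    (hz : σz = !![1, 0; 0, -1]) :
    ∀ (r s : ℕ) (M : Matrix (Fin 2) (Fin 2) ℂ),
      (q ^ r * p ^ s) ⊗ₜ[ℂ] M ∈
        LieSubalgebra.lieSpan ℂ
          (Module.End ℂ (Polynomial ℂ) ⊗[ℂ] Matrix (Fin 2) (Fin 2) ℂ)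
          ({n ⊗ₜ[ℂ] σz,
            q ⊗ₜ[ℂ] (1 : Matrix (Fin 2) (Fin 2) ℂ),
            p ⊗ₜ[ℂ] (1 : Matrix (Fin 2) (Fin 2) ℂ),
            (1 : Module.End ℂ (Polynomial ℂ)) ⊗ₜ[ℂ] σx,
            (1 : Module.End ℂ (Polynomial ℂ)) ⊗ₜ[ℂ] σy} :
            Set (Module.End ℂ (Polynomial ℂ) ⊗[ℂ] Matrix (Fin 2) (Fin 2) ℂ)) := by
  obtain rfl : σx = pauliX := hx
  obtain rfl : σy = pauliY := hy
  obtain rfl : σz = pauliZ := hz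
  subst hn
  have hc := Polynomial.commutator_mul_X_derivative hq hp
  refine pow_mul_pow_tmul_mem hc I_ne_zero ?_ ?_ ?_ ?_
  · exact subset_lieSpan (by simp)
  · exact subset_lieSpan (by simp)
  · rw [← smul_tmul_mem_iff I_ne_zero, ← commutator_number_momentum hc]
    exact commutator_tmul_mem_of_tmul_one (subset_lieSpan (by simp)) (subset_lieSpan (by simp))
  · rw [← smul_tmul_mem_iff (neg_ne_zero.mpr I_ne_zero), neg_smul,
      ← commutator_number_position hc]
    exact commutator_tmul_mem_of_tmul_one (subset_lieSpan (by simp)) (subset_lieSpan (by simp))
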